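/- Let G be a C_3^{(3)}-saturated 3-uniform hypergraph, let ℓ ≥ 9 be an integer, and let h be a vertex of G. Then there are at most 6ℓ^2 vertices z ≠ h such that d(z) ≤ 8, the pair hz is a bad pair, and every vertex of N(z) \ {h} has degree less than ℓ. -/

import Mathlib

/-!
Fix one vertex `z₀` of the set. For any other member `z`, the triple `{h, z₀, z}` is an edge or,
by saturation, closes a loose triangle with two edges of `G`. Those two edges form a link between
two vertices of the triple through a vertex outside it; as the pairs `h z₀` and `h z` are bad, it
joins `z₀` to `z` avoiding `h`. So the set lies within distance two of `z₀` in `G - h`, and the degree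
bounds give at most `1 + 16 + 16 · 2ℓ ≤ 6ℓ²` such vertices.
-/

open Finset

variable {V : Type*}

/-- `E` is the edge set of a 3-uniform hypergraph: every edge has 3 vertices. -/
def IsUniform3 [DecidableEq V] (E : Finset (Finset V)) : Prop :=
  ∀ e ∈ E, e.card = 3

/-- `E` contains a copy of the loose cycle `C₃⁽³⁾`: three edges whose pairwise
intersections are three distinct single vertices, with empty triple intersection. -/
def HasC3 [DecidableEq V] (E : Finset (Finset V)) : Prop :=
  ∃ e₁ ∈ E, ∃ e₂ ∈ E, ∃ e₃ ∈ E, ∃ a b c : V,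
    e₁ ∩ e₂ = {a} ∧ e₂ ∩ e₃ = {b} ∧ e₁ ∩ e₃ = {c} ∧
    a ≠ b ∧ b ≠ c ∧ a ≠ c ∧ e₁ ∩ e₂ ∩ e₃ = ∅

/-- `E` is a `C₃⁽³⁾`-saturated 3-uniform hypergraph: it is 3-uniform, `C₃⁽³⁾`-free,
and adding any non-edge triple creates a copy of `C₃⁽³⁾`. -/
def IsSat3 [DecidableEq V] (E : Finset (Finset V)) : Prop :=
  IsUniform3 E ∧ ¬ HasC3 E ∧
    ∀ e : Finset V, e.card = 3 → e ∉ E → HasC3 (insert e E)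

/-- The degree of a vertex: the number of edges containing it. -/
def deg [DecidableEq V] (E : Finset (Finset V)) (v : V) : ℕ :=
  (E.filter fun e => v ∈ e).card

/-- The codegree of a pair of vertices: number of edges containing both. -/
def codeg [DecidableEq V] (E : Finset (Finset V)) (u v : V) : ℕ :=
  (E.filter fun e => u ∈ e ∧ v ∈ e).card

/-- `u` and `v` are distinct and share an edge (`v ∈ N(u)`). -/
def Adj [DecidableEq V] (E : Finset (Finset V)) (u v : V) : Prop :=
  u ≠ v ∧ ∃ e ∈ E, u ∈ e ∧ v ∈ e

/-- `e₁, e₂` form a `u,v`-link: a loose path of two edges from `u` to `v`. -/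
def IsLink [DecidableEq V] (E : Finset (Finset V)) (u v : V) (e₁ e₂ : Finset V) : Prop :=
  e₁ ∈ E ∧ e₂ ∈ E ∧ u ∈ e₁ ∧ v ∈ e₂ ∧ u ∉ e₂ ∧ v ∉ e₁ ∧
    ∃ w, w ∉ ({u, v} : Finset V) ∧ e₁ ∩ e₂ = {w}

/-- `uv` is a good pair: there exists a `u,v`-link. -/
def GoodPair [DecidableEq V] (E : Finset (Finset V)) (u v : V) : Prop :=
  ∃ e₁ e₂, IsLink E u v e₁ e₂

lemma Set.ncard_le_of_nonempty_imp {α : Type*} {s : Set α} {n : ℕ}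
    (h : s.Nonempty → s.ncard ≤ n) : s.ncard ≤ n := by
  rcases s.eq_empty_or_nonempty with rfl | hs
  · simp
  · exact h hs

section

variable [DecidableEq V] {E : Finset (Finset V)} {e e₁ e₂ e₃ f g : Finset V} {u v h z z₀ : V}

lemma Adj.symm (huv : Adj E u v) : Adj E v u := by
  obtain ⟨hne, e, he, hu, hv⟩ := huv
  exact ⟨hne.symm, e, he, hv, hu⟩

lemma IsLink.symm (hl : IsLink E u v f g) : IsLink E v u g f := by
  obtain ⟨hf, hg, hu, hv, hug, hvf, w, hw, hfg⟩ := hl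
  exact ⟨hg, hf, hv, hu, hvf, hug, w, by rwa [pair_comm], by rw [inter_comm, hfg]⟩

lemma GoodPair.symm (huv : GoodPair E u v) : GoodPair E v u :=
  let ⟨f, g, hl⟩ := huv
  ⟨g, f, hl.symm⟩

lemma IsLink.ne (hl : IsLink E u v f g) : u ≠ v := by
  rintro rfl
  exact hl.2.2.2.2.1 hl.2.2.2.1

lemma IsLink.exists_adj_adj (hl : IsLink E u v f g) :
    ∃ w ∈ f ∩ g, Adj E u w ∧ Adj E w v := by
  obtain ⟨hf, hg, hu, hv, -, -, w, hw, hfg⟩ := hl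
  have hwfg : w ∈ f ∩ g := by rw [hfg]; exact mem_singleton_self w
  obtain ⟨hwf, hwg⟩ := mem_inter.1 hwfg
  simp only [mem_insert, mem_singleton, not_or] at hw
  exact ⟨w, hwfg, ⟨Ne.symm hw.1, f, hf, hu, hwf⟩, ⟨hw.2, g, hg, hwg, hv⟩⟩

variable (E) in
def nbhd (v : V) : Finset V :=
  (E.filter (v ∈ ·)).biUnion (·.erase v)

lemma mem_nbhd : u ∈ nbhd E v ↔ Adj E v u := by
  simp only [nbhd, Adj, mem_biUnion, mem_filter, mem_erase]
  grind

lemma card_nbhd_le (hu : IsUniform3 E) (v : V) : #(nbhd E v) ≤ 2 * deg E v := by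
  rw [deg, mul_comm]
  refine card_biUnion_le_card_mul _ _ 2 fun e he => ?_
  rw [mem_filter] at he
  rw [card_erase_of_mem he.2, hu e he.1]

/-- `HasC3 E` unfolds to `∃ e₁ ∈ E, ∃ e₂ ∈ E, ∃ e₃ ∈ E, IsLooseTriangle e₁ e₂ e₃`. -/
def IsLooseTriangle (e₁ e₂ e₃ : Finset V) : Prop :=
  ∃ a b c : V, e₁ ∩ e₂ = {a} ∧ e₂ ∩ e₃ = {b} ∧ e₁ ∩ e₃ = {c} ∧
    a ≠ b ∧ b ≠ c ∧ a ≠ c ∧ e₁ ∩ e₂ ∩ e₃ = ∅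

lemma IsLooseTriangle.rotate (T : IsLooseTriangle e₁ e₂ e₃) : IsLooseTriangle e₂ e₃ e₁ := by
  obtain ⟨a, b, c, h₁₂, h₂₃, h₁₃, hab, hbc, hac, h₁₂₃⟩ := T
  refine ⟨b, c, a, h₂₃, by rw [inter_comm, h₁₃], by rw [inter_comm, h₁₂],
    hbc, Ne.symm hac, Ne.symm hab, ?_⟩
  rw [inter_comm, ← inter_assoc, h₁₂₃]

lemma IsLooseTriangle.swap (T : IsLooseTriangle e₁ e₂ e₃) : IsLooseTriangle e₂ e₁ e₃ := by
  obtain ⟨a, b, c, h₁₂, h₂₃, h₁₃, hab, hbc, hac, h₁₂₃⟩ := T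
  exact ⟨a, c, b, by rw [inter_comm, h₁₂], h₁₃, h₂₃, hac, Ne.symm hbc, hab,
    by rw [inter_comm e₂, h₁₂₃]⟩

lemma IsLooseTriangle.ne (T : IsLooseTriangle e₁ e₂ e₃) (he₁ : #e₁ ≠ 1) : e₁ ≠ e₂ := by
  rintro rfl
  obtain ⟨a, -, -, h₁₁, -⟩ := T
  rw [inter_self] at h₁₁
  exact he₁ (by rw [h₁₁, card_singleton])

lemma IsLooseTriangle.mem_of_mem_insert (T : IsLooseTriangle e e₂ e₃) (he : #e ≠ 1)
    (h₂ : e₂ ∈ insert e E) (h₃ : e₃ ∈ insert e E) : e₂ ∈ E ∧ e₃ ∈ E := by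
  refine ⟨(mem_insert.1 h₂).resolve_left (T.ne he).symm, (mem_insert.1 h₃).resolve_left ?_⟩
  rintro rfl
  exact T.rotate.rotate.ne he rfl

lemma exists_isLooseTriangle_of_hasC3_insert (hfree : ¬ HasC3 E) (he : #e ≠ 1)
    (hC3 : HasC3 (insert e E)) : ∃ f ∈ E, ∃ g ∈ E, IsLooseTriangle e f g := by
  obtain ⟨e₁, h₁, e₂, h₂, e₃, h₃, T⟩ := hC3
  replace T : IsLooseTriangle e₁ e₂ e₃ := T
  rcases mem_insert.1 h₁ with rfl | h₁E
  · obtain ⟨h₂E, h₃E⟩ := T.mem_of_mem_insert he h₂ h₃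
    exact ⟨e₂, h₂E, e₃, h₃E, T⟩
  rcases mem_insert.1 h₂ with rfl | h₂E
  · exact ⟨e₁, h₁E, e₃, (T.swap.mem_of_mem_insert he h₁ h₃).2, T.swap⟩
  rcases mem_insert.1 h₃ with rfl | h₃E
  · exact ⟨e₁, h₁E, e₂, h₂E, T.rotate.rotate⟩
  exact absurd ⟨e₁, h₁E, e₂, h₂E, e₃, h₃E, T⟩ hfree

lemma IsLooseTriangle.isLink (T : IsLooseTriangle e₁ e₂ e₃) (h₂ : e₂ ∈ E) (h₃ : e₃ ∈ E) :
    ∃ u ∈ e₁, ∃ v ∈ e₁, IsLink E u v e₂ e₃ ∧ Disjoint (e₂ ∩ e₃) e₁ := by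
  obtain ⟨a, b, c, h₁₂, h₂₃, h₁₃, hab, hbc, hac, h₁₂₃⟩ := T
  have mem {s t : Finset V} {x : V} (hst : s ∩ t = {x}) : x ∈ s ∧ x ∈ t :=
    mem_inter.1 (hst ▸ mem_singleton_self x)
  have hnot_mem (x : V) (x₁ : x ∈ e₁) (x₂ : x ∈ e₂) (x₃ : x ∈ e₃) : False :=
    eq_empty_iff_forall_notMem.1 h₁₂₃ x (mem_inter.2 ⟨mem_inter.2 ⟨x₁, x₂⟩, x₃⟩)
  obtain ⟨ha₁, ha₂⟩ := mem h₁₂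
  obtain ⟨hb₂, hb₃⟩ := mem h₂₃
  obtain ⟨hc₁, hc₃⟩ := mem h₁₃
  refine ⟨a, ha₁, c, hc₁, ⟨h₂, h₃, ha₂, hc₃, hnot_mem a ha₁ ha₂, (hnot_mem c hc₁ · hc₃),
    b, by simp [hab.symm, hbc], h₂₃⟩, ?_⟩
  rw [h₂₃, disjoint_singleton_left]
  exact (hnot_mem b · hb₂ hb₃)

lemma IsSat3.exists_isLink (hsat : IsSat3 E) (he : #e = 3) (heE : e ∉ E) :
    ∃ u ∈ e, ∃ v ∈ e, ∃ f g, IsLink E u v f g ∧ Disjoint (f ∩ g) e := by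
  obtain ⟨f, hf, g, hg, T⟩ :=
    exists_isLooseTriangle_of_hasC3_insert hsat.2.1 (by omega) (hsat.2.2 e he heE)
  obtain ⟨u, hu, v, hv, hl, hd⟩ := T.isLink hf hg
  exact ⟨u, hu, v, hv, f, g, hl, hd⟩

lemma IsSat3.adj_or_exists_adj_adj (hsat : IsSat3 E) (hz₀h : z₀ ≠ h) (hzh : z ≠ h)
    (hz₀z : z₀ ≠ z) (hz₀ : ¬ GoodPair E h z₀) (hz : ¬ GoodPair E h z) :
    Adj E z₀ z ∨ ∃ r ≠ h, Adj E z₀ r ∧ Adj E r z := by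
  by_cases hE : {h, z₀, z} ∈ E
  · exact Or.inl ⟨hz₀z, _, hE, by simp, by simp⟩
  have hcard : #{h, z₀, z} = 3 := by
    rw [card_insert_of_notMem (by simp [hz₀h.symm, hzh.symm]), card_pair hz₀z]
  obtain ⟨u, hu, v, hv, f, g, hl, hd⟩ := hsat.exists_isLink hcard hE
  obtain ⟨w, hw, huw, hwv⟩ := hl.exists_adj_adj
  have hwh : w ≠ h := fun hwh => disjoint_left.1 hd hw (by simp [hwh])
  have huv : u ≠ v := hl.ne
  have hgood : GoodPair E u v := ⟨f, g, hl⟩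
  simp only [mem_insert, mem_singleton] at hu hv
  rcases hu with rfl | rfl | rfl <;> rcases hv with rfl | rfl | rfl
  · exact absurd rfl huv
  · exact absurd hgood hz₀
  · exact absurd hgood hz
  · exact absurd hgood.symm hz₀
  · exact absurd rfl huv
  · exact Or.inr ⟨w, hwh, huw, hwv⟩
  · exact absurd hgood.symm hz
  · exact Or.inr ⟨w, hwh, hwv.symm, huw.symm⟩
  · exact absurd rfl huv

lemma IsSat3.mem_of_not_goodPair (hsat : IsSat3 E) (hz₀h : z₀ ≠ h) (hz₀ : ¬ GoodPair E h z₀)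
    (hzh : z ≠ h) (hz : ¬ GoodPair E h z) :
    z ∈ insert z₀ ((nbhd E z₀).erase h ∪ ((nbhd E z₀).erase h).biUnion (nbhd E)) := by
  obtain rfl | hz₀z := eq_or_ne z₀ z
  · exact mem_insert_self _ _
  refine mem_insert_of_mem ?_
  rcases hsat.adj_or_exists_adj_adj hz₀h hzh hz₀z hz₀ hz with hadj | ⟨r, hrh, h₀r, hrz⟩
  · exact mem_union_left _ (mem_erase.2 ⟨hzh, mem_nbhd.2 hadj⟩)
  · exact mem_union_right _ (mem_biUnion.2 ⟨r, mem_erase.2 ⟨hrh, mem_nbhd.2 h₀r⟩, mem_nbhd.2 hrz⟩)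

lemma card_insert_union_biUnion_nbhd_le (hu : IsUniform3 E) (z : V) (R : Finset V) {d : ℕ}
    (hR : ∀ r ∈ R, deg E r ≤ d) :
    #(insert z (R ∪ R.biUnion (nbhd E))) ≤ 1 + (#R + #R * (2 * d)) := by
  have hbU : #(R.biUnion (nbhd E)) ≤ #R * (2 * d) :=
    card_biUnion_le_card_mul _ _ _ fun r hr => (card_nbhd_le hu r).trans (Nat.mul_le_mul_left 2 (hR r hr))
  have := card_union_le R (R.biUnion (nbhd E))
  have := card_insert_le z (R ∪ R.biUnion (nbhd E))
  omega

end

theorem few_bad_pair_low_vertices_general {V : Type*} [DecidableEq V]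
    (E : Finset (Finset V)) (hsat : IsSat3 E) (ℓ : ℕ) (hl : 9 ≤ ℓ) (h : V) :
    ({z : V | z ≠ h ∧ deg E z ≤ 8 ∧ ¬ GoodPair E h z ∧
        ∀ u : V, Adj E z u → u ≠ h → deg E u < ℓ}).ncard ≤ 6 * ℓ ^ 2 := by
  refine Set.ncard_le_of_nonempty_imp fun ⟨z₀, hz₀h, hz₀d, hz₀, hz₀ℓ⟩ => ?_
  set R := (nbhd E z₀).erase h
  have hR : #R ≤ 16 := card_erase_le.trans ((card_nbhd_le hsat.1 z₀).trans (by omega))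
  have hRdeg : ∀ r ∈ R, deg E r ≤ ℓ := fun r hr =>
    (hz₀ℓ r (mem_nbhd.1 (mem_of_mem_erase hr)) (ne_of_mem_erase hr)).le
  calc _ ≤ (↑(insert z₀ (R ∪ R.biUnion (nbhd E))) : Set V).ncard :=
        Set.ncard_le_ncard (fun z hz => hsat.mem_of_not_goodPair hz₀h hz₀ hz.1 hz.2.2.1)
          (finite_toSet _)
    _ ≤ 1 + (#R + #R * (2 * ℓ)) := by
        rw [Set.ncard_coe_finset]
        exact card_insert_union_biUnion_nbhd_le hsat.1 z₀ R hRdeg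
    _ ≤ 6 * ℓ ^ 2 := by nlinarith

theorem few_bad_pair_low_vertices {V : Type*} [Fintype V] [DecidableEq V]
    (E : Finset (Finset V)) (hsat : IsSat3 E) (ℓ : ℕ) (hl : 9 ≤ ℓ) (h : V) :
    ({z : V | z ≠ h ∧ deg E z ≤ 8 ∧ ¬ GoodPair E h z ∧
        ∀ u : V, Adj E z u → u ≠ h → deg E u < ℓ}).ncard ≤ 6 * ℓ ^ 2 :=
  few_bad_pair_low_vertices_general E hsat ℓ hl h
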